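/- arXiv:1506.07101 — 4 statements merged into one kernel-verified Lean document; each statement's English description precedes it below -/
import Mathlib

section
/- Let X be a Hausdorff topological space, f₁,…,f_k : X → X continuous maps, and A a pointwise attractor for the IFS which is strongly-fibred. Then A is contractible. Moreover, if A is in addition a strict attractor, then for every compact set K ⊆ B(A) and every open set U with A ∩ U ≠ ∅ there exists g ∈ Γ such that g(K) ⊆ U. -/
open Set Filter Topology

/-- The Hutchinson operator of the IFS generated by `f 0, …, f (k-1)`. -/
def Hutch {X : Type*} {k : ℕ} (f : Fin k → X → X) (S : Set X) : Set X :=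
  ⋃ i, f i '' S

/-- The semigroup generated by the maps `f 0, …, f (k-1)`: all finite (nonempty)
compositions. -/
def IFSsemigroup {X : Type*} {k : ℕ} (f : Fin k → X → X) : Set (X → X) :=
  {g | ∃ l : List (Fin k), l ≠ [] ∧ g = (l.map f).foldr (· ∘ ·) id}

/-- The Γ-orbit of a point. -/
def GammaOrbit {X : Type*} {k : ℕ} (f : Fin k → X → X) (x : X) : Set X :=
  {y | ∃ g ∈ IFSsemigroup f, g x = y}

/-- Convergence of a sequence of sets to a compact set `L` in the Vietoris sense. -/
def VTendsto {X : Type*} [TopologicalSpace X] (A : ℕ → Set X) (L : Set X) : Prop :=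
  ∀ U V : Set X, IsOpen U → L ⊆ U → IsOpen V → (V ∩ L).Nonempty →
    ∃ n₀ : ℕ, ∀ n ≥ n₀, A n ⊆ U ∧ (A n ∩ V).Nonempty

/-- The pointwise basin of a compact set `A`. -/
def BasinP {X : Type*} [TopologicalSpace X] {k : ℕ} (f : Fin k → X → X) (A : Set X) :
    Set X :=
  {x | VTendsto (fun n => (Hutch f)^[n] {x}) A}

/-- `A` is a pointwise attractor. -/
def IsPointwiseAttractor {X : Type*} [TopologicalSpace X] {k : ℕ}
    (f : Fin k → X → X) (A : Set X) : Prop :=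
  IsCompact A ∧ A.Nonempty ∧ ∃ U : Set X, IsOpen U ∧ A ⊆ U ∧ U ⊆ BasinP f A

/-- `A` is a strict attractor. -/
def IsStrictAttractor {X : Type*} [TopologicalSpace X] {k : ℕ}
    (f : Fin k → X → X) (A : Set X) : Prop :=
  IsCompact A ∧ A.Nonempty ∧ ∃ U : Set X, IsOpen U ∧ A ⊆ U ∧
    ∀ K : Set X, K.Nonempty → IsCompact K → K ⊆ U →
      VTendsto (fun n => (Hutch f)^[n] K) A

/-- The basin of a strict attractor: the union of all open neighborhoods witnessing
the attraction. -/
def BasinS {X : Type*} [TopologicalSpace X] {k : ℕ} (f : Fin k → X → X) (A : Set X) :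
    Set X :=
  ⋃₀ {U : Set X | IsOpen U ∧ A ⊆ U ∧
    ∀ K : Set X, K.Nonempty → IsCompact K → K ⊆ U →
      VTendsto (fun n => (Hutch f)^[n] K) A}

/-- `f_ω^n = f_{ω n-1} ∘ ⋯ ∘ f_{ω 0}` (the orbital branch corresponding to `ω`). -/
def FibIter {X : Type*} {k : ℕ} (f : Fin k → X → X) (ω : ℕ → Fin k) : ℕ → X → X
  | 0 => id
  | n + 1 => f (ω n) ∘ FibIter f ω n

/-- The tail `{f_ω^m x : m ≥ n}` of the ω-fiberwise orbit of `x`. -/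
def TailOrbit {X : Type*} {k : ℕ} (f : Fin k → X → X) (ω : ℕ → Fin k) (x : X) (n : ℕ) :
    Set X :=
  {y | ∃ m ≥ n, FibIter f ω m x = y}

/-- The ω-fiberwise orbit `O⁺_ω(x) = {f_ω^n x : n ≥ 1}`. -/
def Oplus {X : Type*} {k : ℕ} (f : Fin k → X → X) (ω : ℕ → Fin k) (x : X) : Set X :=
  TailOrbit f ω x 1

/-- The shift map on `Ω = {1,…,k}^ℕ`. -/
def shiftSeq {k : ℕ} (ω : ℕ → Fin k) : ℕ → Fin k := fun n => ω (n + 1)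

/-- A sequence is disjunctive if its orbit under the shift is dense in
`Ω = {1,…,k}^ℕ` (with the product topology). -/
def Disjunctive {k : ℕ} (ω : ℕ → Fin k) : Prop :=
  Dense (Set.range fun n => shiftSeq^[n] ω)

/-- The IFS is forward minimal on the whole space. -/
def ForwardMinimal {X : Type*} [TopologicalSpace X] {k : ℕ} (f : Fin k → X → X) : Prop :=
  ∀ B : Set X, B.Nonempty → IsClosed B → (∀ i, f i '' B ⊆ B) → B = Set.univ

/-- The IFS is backward minimal on the whole space. -/
def BackwardMinimal {X : Type*} [TopologicalSpace X] {k : ℕ} (f : Fin k → X → X) : Prop :=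
  ∀ B : Set X, B.Nonempty → IsClosed B →
    (∀ g ∈ IFSsemigroup f, (g ⁻¹' B).Nonempty ∧ g ⁻¹' B ⊆ B) → B = Set.univ

/-- The attractor `A` is contractible. -/
def ContractibleAttractor {X : Type*} [TopologicalSpace X] {k : ℕ}
    (f : Fin k → X → X) (A : Set X) : Prop :=
  ∀ K : Set X, K ⊆ A → IsCompact K → K ≠ A →
    ∀ 𝒰 : Set (Set X), (∀ U ∈ 𝒰, IsOpen U) → A ⊆ ⋃₀ 𝒰 →
      ∃ g ∈ IFSsemigroup f, ∃ U ∈ 𝒰, g '' K ⊆ U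

/-- `f_{ω 0} ∘ ⋯ ∘ f_{ω (n-1)}` (compositions in the reverse order). -/
def FibDown {X : Type*} {k : ℕ} (f : Fin k → X → X) (ω : ℕ → Fin k) : ℕ → X → X
  | 0 => id
  | n + 1 => FibDown f ω n ∘ f (ω n)

/-- The attractor `A` is strongly-fibred. -/
def StronglyFibred {X : Type*} [TopologicalSpace X] {k : ℕ}
    (f : Fin k → X → X) (A : Set X) : Prop :=
  ∀ U : Set X, IsOpen U → (U ∩ A).Nonempty →
    ∃ ω : ℕ → Fin k, (⋂ n, FibDown f ω n '' A) ⊆ U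

section AuxAll

variable {X : Type*} {k : ℕ}

lemma foldr_comp_const (l : List (X → X)) (c : X → X) :
    l.foldr (· ∘ ·) c = l.foldr (· ∘ ·) id ∘ c := by
  induction l with
  | nil => rfl
  | cons a l ih => simp [List.foldr_cons, ih, Function.comp_assoc]

lemma fibDown_eq_foldr (f : Fin k → X → X) (ω : ℕ → Fin k) (n : ℕ) :
    FibDown f ω n = (((List.range n).map ω).map f).foldr (· ∘ ·) id := by
  induction n with
  | zero => rfl
  | succ n ih =>
    rw [List.range_succ]
    simp only [List.map_append, List.foldr_append, List.map_cons, List.map_nil,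
      List.foldr_cons, List.foldr_nil]
    rw [foldr_comp_const]
    simp [FibDown, ih]

lemma fibDown_mem_semigroup (f : Fin k → X → X) (ω : ℕ → Fin k) {n : ℕ} (hn : 1 ≤ n) :
    FibDown f ω n ∈ IFSsemigroup f := by
  refine ⟨(List.range n).map ω, ?_, fibDown_eq_foldr f ω n⟩
  simp [List.range_eq_nil]
  omega

lemma fibDown_comp_mem (f : Fin k → X → X) (ω ω' : ℕ → Fin k) {m : ℕ} (hm : 1 ≤ m) (n : ℕ) :
    FibDown f ω m ∘ FibDown f ω' n ∈ IFSsemigroup f := by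
  refine ⟨(List.range m).map ω ++ (List.range n).map ω', ?_, ?_⟩
  · simp [List.range_eq_nil]; omega
  · rw [List.map_append, List.foldr_append, ← fibDown_eq_foldr, foldr_comp_const,
      ← fibDown_eq_foldr]

lemma hutch_iUnion {ι : Sort*} (f : Fin k → X → X) (S : ι → Set X) :
    Hutch f (⋃ j, S j) = ⋃ j, Hutch f (S j) := by
  simp only [Hutch, image_iUnion]
  exact iUnion_comm _

lemma hutch_iterate_iUnion {ι : Sort*} (f : Fin k → X → X) (S : ι → Set X) (n : ℕ) :
    (Hutch f)^[n] (⋃ j, S j) = ⋃ j, (Hutch f)^[n] (S j) := by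
  induction n with
  | zero => simp
  | succ n ih => simp only [Function.iterate_succ_apply', ih, hutch_iUnion]

lemma hutch_iterate_empty (f : Fin k → X → X) (n : ℕ) : (Hutch f)^[n] (∅ : Set X) = ∅ := by
  induction n with
  | zero => rfl
  | succ n ih => rw [Function.iterate_succ_apply', ih]; simp [Hutch]

lemma hutch_mono (f : Fin k → X → X) {S T : Set X} (h : S ⊆ T) : Hutch f S ⊆ Hutch f T :=
  iUnion_mono fun _ => image_mono h

lemma hutch_iterate_mono (f : Fin k → X → X) (n : ℕ) {S T : Set X} (h : S ⊆ T) :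
    (Hutch f)^[n] S ⊆ (Hutch f)^[n] T := by
  induction n generalizing S T with
  | zero => exact h
  | succ n ih => rw [Function.iterate_succ_apply, Function.iterate_succ_apply]
                 exact ih (hutch_mono f h)

lemma fibDown_image_subset_hutch_iterate (f : Fin k → X → X) (ω : ℕ → Fin k) (n : ℕ)
    (S : Set X) : FibDown f ω n '' S ⊆ (Hutch f)^[n] S := by
  induction n generalizing S with
  | zero => simp [FibDown]
  | succ n ih =>
    rw [Function.iterate_succ_apply]
    have : FibDown f ω (n+1) '' S = FibDown f ω n '' (f (ω n) '' S) := by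
      rw [← image_comp]; rfl
    rw [this]
    exact (ih _).trans (hutch_iterate_mono f n (subset_iUnion_of_subset (ω n) subset_rfl))

lemma fibDown_image_subset_self {f : Fin k → X → X} {A : Set X}
    (hinv : ∀ i, f i '' A ⊆ A) (ω : ℕ → Fin k) (m : ℕ) : FibDown f ω m '' A ⊆ A := by
  induction m with
  | zero => simp [FibDown]
  | succ m ih =>
    have : FibDown f ω (m + 1) '' A = FibDown f ω m '' (f (ω m) '' A) := by
      rw [← image_comp]; rfl
    rw [this]
    exact (image_mono (hinv (ω m))).trans ih

variable [TopologicalSpace X]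

lemma fibDown_continuous {f : Fin k → X → X}
    (hf : ∀ i, Continuous (f i)) (ω : ℕ → Fin k) (n : ℕ) :
    Continuous (FibDown f ω n) := by
  induction n with
  | zero => exact continuous_id
  | succ n ih => exact ih.comp (hf _)

lemma fibDown_image_antitone {f : Fin k → X → X} {A : Set X}
    (hinv : ∀ i, f i '' A ⊆ A) (ω : ℕ → Fin k) :
    Antitone fun n => FibDown f ω n '' A := by
  refine antitone_nat_of_succ_le fun n => ?_
  have : FibDown f ω (n + 1) '' A = FibDown f ω n '' (f (ω n) '' A) := by
    rw [← image_comp]; rfl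
  rw [this]
  exact image_mono (hinv (ω n))

lemma vtendsto_hutch {f : Fin k → X → X} (hf : ∀ i, Continuous (f i))
    {A : ℕ → Set X} {L : Set X} (h : VTendsto A L) :
    VTendsto (fun n => Hutch f (A n)) (Hutch f L) := by
  intro U V hU hLU hV hVL
  obtain ⟨y, hyV, hyL⟩ := hVL
  obtain ⟨i, a, haL, hay⟩ : ∃ i, ∃ a ∈ L, f i a = y := by
    simpa [Hutch] using hyL
  have hW : IsOpen (⋂ i, f i ⁻¹' U) := isOpen_iInter_of_finite fun i => hU.preimage (hf i)
  have hLW : L ⊆ ⋂ i, f i ⁻¹' U := fun a ha => mem_iInter.2 fun i =>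
    hLU (mem_iUnion.2 ⟨i, mem_image_of_mem _ ha⟩)
  obtain ⟨n₀, hn₀⟩ := h _ (f i ⁻¹' V) hW hLW (hV.preimage (hf i)) ⟨a, by simp [hay, hyV], haL⟩
  refine ⟨n₀, fun n hn => ⟨?_, ?_⟩⟩
  · rintro z hz
    obtain ⟨j, w, hw, rfl⟩ : ∃ j, ∃ w ∈ A n, f j w = z := by simpa [Hutch] using hz
    exact mem_iInter.1 ((hn₀ n hn).1 hw) j
  · obtain ⟨w, hwA, hwV⟩ := (hn₀ n hn).2
    exact ⟨f i w, mem_iUnion.2 ⟨i, mem_image_of_mem _ hwA⟩, hwV⟩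

lemma vtendsto_shift {A : ℕ → Set X} {L : Set X} (h : VTendsto A L) :
    VTendsto (fun n => A (n + 1)) L := by
  intro U V hU hLU hV hVL
  obtain ⟨n₀, hn₀⟩ := h U V hU hLU hV hVL
  exact ⟨n₀, fun n hn => hn₀ (n + 1) (by omega)⟩

variable [T2Space X]

lemma vtendsto_unique {A : ℕ → Set X} {L₁ L₂ : Set X} (h₁ : VTendsto A L₁)
    (h₂ : VTendsto A L₂) (hc₂ : IsCompact L₂) (hne₂ : L₂.Nonempty) : L₁ ⊆ L₂ := by
  intro x hx
  by_contra hxL'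
  obtain ⟨U, V, hU, hV, hLU, hxV, hdis⟩ := hc₂.separation_of_notMem hxL'
  obtain ⟨n₁, hn₁⟩ := h₂ U univ hU hLU isOpen_univ (by simpa using hne₂)
  obtain ⟨n₂, hn₂⟩ := h₁ univ V isOpen_univ (subset_univ _) hV ⟨x, hxV, hx⟩
  obtain ⟨y, hyA, hyV⟩ := (hn₂ (max n₁ n₂) (le_max_right _ _)).2
  exact hdis.ne_of_mem ((hn₁ (max n₁ n₂) (le_max_left _ _)).1 hyA) hyV rfl

lemma attractor_invariant {f : Fin k → X → X} (hf : ∀ i, Continuous (f i))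
    {A : Set X} (hA : IsPointwiseAttractor f A) : Hutch f A = A := by
  obtain ⟨hAc, ⟨x, hxA⟩, U₀, hU₀o, hAU₀, hU₀B⟩ := hA
  have hx : VTendsto (fun n => (Hutch f)^[n] {x}) A := hU₀B (hAU₀ hxA)
  have hkpos : Nonempty (Fin k) := by
    obtain ⟨n₀, hn₀⟩ := hx univ univ isOpen_univ (subset_univ _) isOpen_univ
      (by simpa using ⟨x, hxA⟩)
    obtain ⟨y, hy, -⟩ := (hn₀ (n₀ + 1) (by omega)).2
    have hy' : y ∈ (Hutch f)^[n₀ + 1] ({x} : Set X) := hy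
    rw [Function.iterate_succ_apply'] at hy'
    obtain ⟨i, -, -⟩ : ∃ i, ∃ w ∈ (Hutch f)^[n₀] ({x} : Set X), f i w = y := by
      simpa [Hutch] using hy'
    exact ⟨i⟩
  obtain ⟨i⟩ := hkpos
  have hHne : (Hutch f A).Nonempty := ⟨f i x, mem_iUnion.2 ⟨i, mem_image_of_mem _ hxA⟩⟩
  have hHc : IsCompact (Hutch f A) := isCompact_iUnion fun i => hAc.image (hf i)
  have h₁ : VTendsto (fun n => (Hutch f)^[n + 1] {x}) A := vtendsto_shift hx
  have h₂ : VTendsto (fun n => (Hutch f)^[n + 1] {x}) (Hutch f A) := by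
    have := vtendsto_hutch hf hx
    simpa only [← Function.iterate_succ_apply'] using this
  exact subset_antisymm (vtendsto_unique h₂ h₁ hAc ⟨x, hxA⟩) (vtendsto_unique h₁ h₂ hHc hHne)

/-- From strong fibredness: a nonempty composition contracting `A` into `U`. -/
lemma exists_fibDown_image_subset {f : Fin k → X → X} (hf : ∀ i, Continuous (f i))
    {A : Set X} (hAc : IsCompact A) (hAne : A.Nonempty) (hinv : ∀ i, f i '' A ⊆ A)
    (hsf : StronglyFibred f A) {U : Set X} (hU : IsOpen U) (hUA : (U ∩ A).Nonempty) :
    ∃ ω : ℕ → Fin k, ∃ m : ℕ, 1 ≤ m ∧ FibDown f ω m '' A ⊆ U := by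
  obtain ⟨ω, hω⟩ := hsf U hU hUA
  have hcl : ∀ n, IsClosed (FibDown f ω n '' A) := fun n =>
    ((hAc.image (fibDown_continuous hf ω n)).isClosed)
  have hdir : Directed (· ⊇ ·) fun n => FibDown f ω n '' A := by
    intro a b
    exact ⟨max a b, fibDown_image_antitone hinv ω (le_max_left a b),
      fibDown_image_antitone hinv ω (le_max_right a b)⟩
  have hempty : ((A ∩ Uᶜ) ∩ ⋂ n, FibDown f ω n '' A) = ∅ := by
    rw [eq_empty_iff_forall_notMem]
    rintro y ⟨⟨-, hyU⟩, hy⟩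
    exact hyU (hω hy)
  obtain ⟨n, hn⟩ := (hAc.inter_right hU.isClosed_compl).elim_directed_family_closed
    _ hcl hempty hdir
  refine ⟨ω, max n 1, le_max_right _ _, ?_⟩
  intro y hy
  have hyn : y ∈ FibDown f ω n '' A := fibDown_image_antitone hinv ω (le_max_left n 1) hy
  by_contra hyU
  have hyA : y ∈ A := fibDown_image_subset_self hinv ω (max n 1) hy
  exact (eq_empty_iff_forall_notMem.1 hn y) ⟨⟨hyA, hyU⟩, hyn⟩

end AuxAll
section Main

variable {X : Type*} {k : ℕ}

theorem strongly_fibred_implies_contractible'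
    [TopologicalSpace X] [T2Space X]
    (f : Fin k → X → X) (hf : ∀ i, Continuous (f i))
    (A : Set X) (hA : IsPointwiseAttractor f A)
    (hsf : StronglyFibred f A) :
    ContractibleAttractor f A ∧
    (IsStrictAttractor f A →
      ∀ K : Set X, IsCompact K → K ⊆ BasinS f A →
        ∀ U : Set X, IsOpen U → (A ∩ U).Nonempty →
          ∃ g ∈ IFSsemigroup f, g '' K ⊆ U) := by
  have hAc : IsCompact A := hA.1
  have hAne : A.Nonempty := hA.2.1
  have hinveq : Hutch f A = A := attractor_invariant hf hA
  have hinv : ∀ i, f i '' A ⊆ A := fun i =>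
    (subset_iUnion_of_subset i subset_rfl).trans hinveq.subset
  constructor
  · -- contractibility
    intro K hKA hKc hKne 𝒰 h𝒰 hcov
    obtain ⟨a, haA⟩ := hA.2.1
    obtain ⟨U, hU𝒰, haU⟩ := hcov haA
    obtain ⟨ω, m, hm, hsub⟩ := exists_fibDown_image_subset hf hAc hAne hinv hsf
      (h𝒰 U hU𝒰) ⟨a, haU, haA⟩
    exact ⟨FibDown f ω m, fibDown_mem_semigroup f ω hm, U, hU𝒰,
      (image_mono hKA).trans hsub⟩
  · -- strict attractor part
    intro _ K hKc hKB U hU hAU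
    obtain ⟨a, haA, haU⟩ := hAU
    -- k ≥ 1
    have hi₀ : Nonempty (Fin k) := by
      have : a ∈ Hutch f A := hinveq.symm.subset haA
      obtain ⟨i, -⟩ := mem_iUnion.1 this
      exact ⟨i⟩
    obtain ⟨i₀⟩ := hi₀
    obtain ⟨ω, m, hm, hgsub⟩ := exists_fibDown_image_subset hf hAc hAne hinv hsf hU
      ⟨a, haU, haA⟩
    set g := FibDown f ω m with hg
    have hgc : Continuous g := fibDown_continuous hf ω m
    set V : Set X := g ⁻¹' U with hV
    have hVo : IsOpen V := hU.preimage hgc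
    have hAV : A ⊆ V := fun x hx => hgsub (mem_image_of_mem _ hx)
    -- find N with (Hutch f)^[N] K ⊆ V
    set S : Set (Set X) := {W : Set X | IsOpen W ∧ A ⊆ W ∧
      ∀ K' : Set X, K'.Nonempty → IsCompact K' → K' ⊆ W →
        VTendsto (fun n => (Hutch f)^[n] K') A} with hS
    have hKB' : K ⊆ ⋃ W : S, (W : Set X) := by
      intro x hx
      obtain ⟨W, hWS, hxW⟩ := hKB hx
      exact mem_iUnion.2 ⟨⟨W, hWS⟩, hxW⟩
    obtain ⟨t, ht⟩ := hKc.elim_finite_subcover (fun W : S => (W : Set X))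
      (fun W => W.2.1) hKB'
    obtain ⟨K', hK'c, hK'sub, hKeq⟩ := hKc.finite_compact_cover t _
      (fun W _ => W.2.1) ht
    have hN : ∀ W : S, ∃ n₀ : ℕ, ∀ n ≥ n₀, (Hutch f)^[n] (K' W) ⊆ V := by
      intro W
      rcases eq_empty_or_nonempty (K' W) with hKe | hKne'
      · exact ⟨0, fun n _ => by rw [hKe, hutch_iterate_empty]; exact empty_subset _⟩
      · have hvt := W.2.2.2 (K' W) hKne' (hK'c W) (hK'sub W)
        obtain ⟨n₀, hn₀⟩ := hvt V univ hVo hAV isOpen_univ (by simpa using hAne)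
        exact ⟨n₀, fun n hn => (hn₀ n hn).1⟩
    choose N hNspec using hN
    set M : ℕ := t.sup N with hM
    have hKV : (Hutch f)^[M] K ⊆ V := by
      rw [hKeq]
      simp only [hutch_iterate_iUnion]
      refine iUnion_subset fun W => iUnion_subset fun hW => ?_
      exact hNspec W M (Finset.le_sup hW)
    refine ⟨g ∘ FibDown f (fun _ => i₀) M, fibDown_comp_mem f ω _ hm M, ?_⟩
    rw [image_comp]
    have h1 : FibDown f (fun _ => i₀) M '' K ⊆ (Hutch f)^[M] K :=
      fibDown_image_subset_hutch_iterate f _ M K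
    calc g '' (FibDown f (fun _ => i₀) M '' K) ⊆ g '' V := image_mono (h1.trans hKV)
      _ ⊆ U := image_preimage_subset _ _

end Main
theorem strongly_fibred_implies_contractible
    {X : Type*} [TopologicalSpace X] [T2Space X] {k : ℕ}
    (f : Fin k → X → X) (hf : ∀ i, Continuous (f i))
    (A : Set X) (hA : IsPointwiseAttractor f A)
    (hsf : StronglyFibred f A) :
    ContractibleAttractor f A ∧
    (IsStrictAttractor f A →
      ∀ K : Set X, IsCompact K → K ⊆ BasinS f A →
        ∀ U : Set X, IsOpen U → (A ∩ U).Nonempty →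
          ∃ g ∈ IFSsemigroup f, g '' K ⊆ U) := by
  exact strongly_fibred_implies_contractible' f hf A hA hsf
end

section
/- Let X be a Hausdorff topological space, f₁,…,f_k : X → X continuous maps, and A a pointwise attractor for the IFS which is contractible and satisfies f_i(A) ≠ A for some i ∈ {1,…,k}. Then A is strongly-fibred. -/
open Set Filter Topology

section AuxLemmas
variable {X : Type*} {k : ℕ} (f : Fin k → X → X)

lemma foldr_comp_init' (l : List (X → X)) (b : X → X) :
    l.foldr (· ∘ ·) b = l.foldr (· ∘ ·) id ∘ b := by
  induction l with
  | nil => rfl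
  | cons a l ih => simp [List.foldr_cons, ih, Function.comp_assoc]

lemma foldr_comp_append (l₁ l₂ : List (Fin k)) :
    ((l₁ ++ l₂).map f).foldr (· ∘ ·) id =
      (l₁.map f).foldr (· ∘ ·) id ∘ (l₂.map f).foldr (· ∘ ·) id := by
  rw [List.map_append, List.foldr_append, foldr_comp_init']

lemma IFSsemigroup.comp {g h : X → X} (hg : g ∈ IFSsemigroup f) (hh : h ∈ IFSsemigroup f) :
    g ∘ h ∈ IFSsemigroup f := by
  obtain ⟨l₁, hl₁, rfl⟩ := hg
  obtain ⟨l₂, hl₂, rfl⟩ := hh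
  exact ⟨l₁ ++ l₂, by simp [hl₁], (foldr_comp_append f l₁ l₂).symm⟩

lemma IFSsemigroup.single (i : Fin k) : f i ∈ IFSsemigroup f :=
  ⟨[i], by simp, rfl⟩

lemma continuous_foldr [TopologicalSpace X] (hf : ∀ i, Continuous (f i)) (l : List (Fin k)) :
    Continuous ((l.map f).foldr (· ∘ ·) id) := by
  induction l with
  | nil => exact continuous_id
  | cons a l ih => exact (hf a).comp ih

lemma IFSsemigroup.continuous [TopologicalSpace X] (hf : ∀ i, Continuous (f i)) {g : X → X}
    (hg : g ∈ IFSsemigroup f) : Continuous g := by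
  obtain ⟨l, -, rfl⟩ := hg
  exact continuous_foldr f hf l

lemma mem_hutch_iter (n : ℕ) (x z : X) :
    z ∈ (Hutch f)^[n] {x} ↔
      ∃ l : List (Fin k), l.length = n ∧ (l.map f).foldr (· ∘ ·) id x = z := by
  induction n generalizing z with
  | zero =>
    simp only [Function.iterate_zero, id_eq, mem_singleton_iff, List.length_eq_zero_iff]
    constructor
    · rintro rfl; exact ⟨[], rfl, rfl⟩
    · rintro ⟨l, rfl, rfl⟩; rfl
  | succ n ih =>
    rw [Function.iterate_succ_apply']
    constructor
    · rintro hz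
      simp only [Hutch, mem_iUnion, mem_image] at hz
      obtain ⟨i, w, hw, rfl⟩ := hz
      obtain ⟨l, hl, rfl⟩ := (ih w).mp hw
      exact ⟨i :: l, by simp [hl], rfl⟩
    · rintro ⟨l, hl, rfl⟩
      match l, hl with
      | i :: l, hl =>
        simp only [Hutch, mem_iUnion, mem_image]
        exact ⟨i, (l.map f).foldr (· ∘ ·) id x, (ih _).mpr ⟨l, by simpa using hl, rfl⟩, rfl⟩

lemma fibDown_congr (ω ω' : ℕ → Fin k) (n : ℕ) (h : ∀ j < n, ω j = ω' j) :
    FibDown f ω n = FibDown f ω' n := by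
  induction n with
  | zero => rfl
  | succ n ih =>
    show FibDown f ω n ∘ f (ω n) = FibDown f ω' n ∘ f (ω' n)
    rw [ih (fun j hj => h j (Nat.lt_succ_of_lt hj)), h n (Nat.lt_succ_self n)]

lemma fibDown_getD (l : List (Fin k)) (d : Fin k) :
    FibDown f (fun n => l.getD n d) l.length = (l.map f).foldr (· ∘ ·) id := by
  induction l using List.reverseRecOn with
  | nil => rfl
  | append_singleton l a ih =>
    have hlen : (l ++ [a]).length = l.length + 1 := by simp
    rw [hlen, List.map_append, List.foldr_append]
    show FibDown f (fun n => (l ++ [a]).getD n d) l.length ∘ f ((l ++ [a]).getD l.length d)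
      = _
    rw [List.getD_append_right l [a] d l.length le_rfl, Nat.sub_self,
      fibDown_congr f _ (fun n => l.getD n d) l.length
        (fun j hj => List.getD_append l [a] d j hj), ih, foldr_comp_init']
    exact (foldr_comp_init' (l.map f) (f a)).symm

end AuxLemmas

theorem contractible_implies_strongly_fibred
    {X : Type*} [TopologicalSpace X] [T2Space X] {k : ℕ}
    (f : Fin k → X → X) (hf : ∀ i, Continuous (f i))
    (A : Set X) (hA : IsPointwiseAttractor f A)
    (hc : ContractibleAttractor f A) (hi : ∃ i, f i '' A ≠ A) :
    StronglyFibred f A := by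
  obtain ⟨i, hiA⟩ := hi
  obtain ⟨hAc, hAne, Ub, hUbo, hAUb, hUbB⟩ := hA
  -- Step 1: the Hutchinson operator maps A into A
  have hFA : Hutch f A ⊆ A := by
    intro y hy
    by_contra hyA
    simp only [Hutch, mem_iUnion, mem_image] at hy
    obtain ⟨j, x, hxA, rfl⟩ := hy
    obtain ⟨U, W, hUo, hWo, hAU, hyW, hdisj⟩ := hAc.separation_of_notMem hyA
    have hx : VTendsto (fun n => (Hutch f)^[n] {x}) A := hUbB (hAUb hxA)
    obtain ⟨n₀, hn₀⟩ := hx U ((f j) ⁻¹' W) hUo hAU ((hf j).isOpen_preimage W hWo)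
      ⟨x, hyW, hxA⟩
    obtain ⟨-, z, hz1, hz2⟩ := hn₀ n₀ le_rfl
    have hfz : f j z ∈ (Hutch f)^[n₀ + 1] {x} := by
      rw [Function.iterate_succ_apply']
      exact mem_iUnion.mpr ⟨j, z, hz1, rfl⟩
    have hmem : f j z ∈ U := (hn₀ (n₀ + 1) (Nat.le_succ n₀)).1 hfz
    exact Set.disjoint_left.mp hdisj hmem hz2
  intro U hUo hUA
  -- Step 2: every point of A can be sent into U by an element of the semigroup
  have key : ∀ y ∈ A, ∃ g ∈ IFSsemigroup f, g y ∈ U := by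
    intro y hyA
    have hy : VTendsto (fun n => (Hutch f)^[n] {y}) A := hUbB (hAUb hyA)
    obtain ⟨n₀, hn₀⟩ := hy univ U isOpen_univ (subset_univ A) hUo hUA
    obtain ⟨-, z, hz1, hz2⟩ := hn₀ (n₀ + 1) (Nat.le_succ n₀)
    obtain ⟨l, hl, hlz⟩ := (mem_hutch_iter f (n₀ + 1) y z).mp hz1
    exact ⟨(l.map f).foldr (· ∘ ·) id,
      ⟨l, fun h => by simp [h] at hl, rfl⟩, hlz ▸ hz2⟩
  -- Step 3: apply contractibility to K = f i '' A with the cover of "good" sets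
  have hKsub : f i '' A ⊆ A := (subset_iUnion (fun j => f j '' A) i).trans hFA
  have hKc : IsCompact (f i '' A) := hAc.image (hf i)
  set 𝒰 : Set (Set X) := {G | IsOpen G ∧ ∃ g ∈ IFSsemigroup f, g '' G ⊆ U} with h𝒰
  have hcover : A ⊆ ⋃₀ 𝒰 := by
    intro a haA
    obtain ⟨g, hg, hga⟩ := key a haA
    exact ⟨g ⁻¹' U, ⟨(IFSsemigroup.continuous f hf hg).isOpen_preimage U hUo,
      g, hg, image_preimage_subset g U⟩, hga⟩
  obtain ⟨h, hh, G, ⟨hGo, g₂, hg₂, hg₂U⟩, hhK⟩ :=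
    hc (f i '' A) hKsub hKc hiA 𝒰 (fun G hG => hG.1) hcover
  -- the composite map sends A into U
  have htotmem : (g₂ ∘ (h ∘ f i)) ∈ IFSsemigroup f :=
    IFSsemigroup.comp f hg₂ (IFSsemigroup.comp f hh (IFSsemigroup.single f i))
  have htot : (g₂ ∘ (h ∘ f i)) '' A ⊆ U := by
    rw [Set.image_comp, Set.image_comp]
    exact (Set.image_mono hhK).trans hg₂U
  obtain ⟨l, hlne, hleq⟩ := htotmem
  refine ⟨fun n => l.getD n i, fun x hx => ?_⟩
  have hxl : x ∈ FibDown f (fun n => l.getD n i) l.length '' A := mem_iInter.mp hx l.length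
  rw [fibDown_getD, ← hleq] at hxl
  exact htot hxl
end

section
/- Let G be a group of homeomorphisms of the circle S¹ generated as a semigroup by f₁,…,f_n (a symmetric generating system), and let K ⊆ S¹ be a nonempty closed set with K ≠ S¹ such that g(K) = K for every g ∈ G, the G-orbit of every point of K is dense in K, and the G-orbit of every point of S¹ \ K is dense in S¹. Let h be a homeomorphism of S¹ with K ⊊ h(K). Then the IFS generated by f₁,…,f_n,h is forward minimal but not backward minimal. -/
open Set Filter Topology

private lemma foldr_mem_aux {X : Type*} {k : ℕ} (f : Fin k → X → X) (B : Set X)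
    (hfB : ∀ i, ∀ x ∈ B, f i x ∈ B) :
    ∀ l : List (Fin k), ∀ x ∈ B, (l.map f).foldr (· ∘ ·) id x ∈ B := by
  intro l
  induction l with
  | nil => intro x hx; simpa using hx
  | cons a l ih => intro x hx; simpa using hfB a _ (ih x hx)

private lemma foldr_pre_aux {X : Type*} {k : ℕ} (f : Fin k → X → X) (K : Set X)
    (hstep : ∀ i, ∀ S : Set X, S ⊆ K → S.Nonempty →
      f i ⁻¹' S ⊆ K ∧ (f i ⁻¹' S).Nonempty) :
    ∀ l : List (Fin k), ∀ S : Set X, S ⊆ K → S.Nonempty →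
      (l.map f).foldr (· ∘ ·) id ⁻¹' S ⊆ K ∧
      ((l.map f).foldr (· ∘ ·) id ⁻¹' S).Nonempty := by
  intro l
  induction l with
  | nil => intro S hS hne; simpa using ⟨hS, hne⟩
  | cons a l ih =>
    intro S hS hne
    have h1 := hstep a S hS hne
    have h2 := ih _ h1.1 h1.2
    simpa [Set.preimage_comp] using h2

theorem forward_minimal_not_backward_minimal_construction
    (G : Set (Circle → Circle))
    (hhomeo : ∀ g ∈ G, IsHomeomorph g) (hid : id ∈ G)
    (hcomp : ∀ g ∈ G, ∀ h ∈ G, g ∘ h ∈ G)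
    (hinv : ∀ g ∈ G, ∃ g' ∈ G, g' ∘ g = id ∧ g ∘ g' = id)
    (K : Set Circle) (hKne : K.Nonempty) (hKcl : IsClosed K) (hKproper : K ≠ Set.univ)
    (hKinv : ∀ g ∈ G, g '' K = K)
    (hKmin : ∀ x ∈ K, K ⊆ closure {y | ∃ g ∈ G, g x = y})
    (hdense : ∀ x ∉ K, Dense {y | ∃ g ∈ G, g x = y})
    {n : ℕ} (f : Fin n → Circle → Circle)
    (hfG : ∀ i, f i ∈ G) (hgen : G ⊆ IFSsemigroup f)
    (h : Circle → Circle) (hh : IsHomeomorph h) (hKh : K ⊂ h '' K) :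
    ForwardMinimal (Fin.snoc f h) ∧ ¬ BackwardMinimal (Fin.snoc f h) := by
  constructor
  · -- Forward minimal
    intro B hBne hBcl hBinv
    have hfB : ∀ i : Fin n, ∀ x ∈ B, f i x ∈ B := by
      intro i x hx
      have := hBinv i.castSucc ⟨x, hx, rfl⟩
      simpa [Fin.snoc_castSucc] using this
    have hhB : ∀ x ∈ B, h x ∈ B := by
      intro x hx
      have := hBinv (Fin.last n) ⟨x, hx, rfl⟩
      simpa [Fin.snoc_last] using this
    have hGB : ∀ g ∈ G, ∀ x ∈ B, g x ∈ B := by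
      intro g hg x hx
      obtain ⟨l, -, rfl⟩ := hgen hg
      exact foldr_mem_aux f B hfB l x hx
    have key : ∀ y, y ∈ B → y ∉ K → B = Set.univ := by
      intro y hyB hyK
      have horb : {z | ∃ g ∈ G, g y = z} ⊆ B := by
        rintro z ⟨g, hg, rfl⟩; exact hGB g hg y hyB
      apply Set.eq_univ_of_univ_subset
      calc Set.univ = closure {z | ∃ g ∈ G, g y = z} := ((hdense y hyK).closure_eq).symm
        _ ⊆ closure B := closure_mono horb
        _ = B := hBcl.closure_eq
    obtain ⟨x, hxB⟩ := hBne
    by_cases hxK : x ∈ K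
    · have hKB : K ⊆ B := by
        have horb : {z | ∃ g ∈ G, g x = z} ⊆ B := by
          rintro z ⟨g, hg, rfl⟩; exact hGB g hg x hxB
        calc K ⊆ closure {z | ∃ g ∈ G, g x = z} := hKmin x hxK
          _ ⊆ closure B := closure_mono horb
          _ = B := hBcl.closure_eq
      obtain ⟨y, hyh, hyK⟩ := Set.not_subset.mp hKh.2
      obtain ⟨kk, hkK, rfl⟩ := hyh
      exact key _ (hhB _ (hKB hkK)) hyK
    · exact key x hxB hxK
  · -- Not backward minimal
    intro hBM
    have hstep : ∀ i : Fin (n + 1), ∀ S : Set Circle, S ⊆ K → S.Nonempty →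
        (Fin.snoc f h : Fin (n + 1) → Circle → Circle) i ⁻¹' S ⊆ K ∧
        ((Fin.snoc f h : Fin (n + 1) → Circle → Circle) i ⁻¹' S).Nonempty := by
      intro i
      induction i using Fin.lastCases with
      | last =>
        intro S hSK hSne
        rw [Fin.snoc_last]
        constructor
        · intro y hy
          obtain ⟨kk, hkK, hk⟩ := hKh.1 (hSK hy)
          rwa [← hh.bijective.injective hk]
        · obtain ⟨s, hs⟩ := hSne
          obtain ⟨t, -, rfl⟩ := hKh.1 (hSK hs)
          exact ⟨t, hs⟩
      | cast i =>
        intro S hSK hSne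
        rw [Fin.snoc_castSucc]
        have hinj := (hhomeo _ (hfG i)).bijective.injective
        have himg := hKinv _ (hfG i)
        constructor
        · intro y hy
          obtain ⟨kk, hkK, hk⟩ := himg ▸ (hSK hy)
          rwa [← hinj hk]
        · obtain ⟨s, hs⟩ := hSne
          obtain ⟨t, -, rfl⟩ := himg ▸ (hSK hs)
          exact ⟨t, hs⟩
    have hcond : ∀ g ∈ IFSsemigroup (Fin.snoc f h), (g ⁻¹' K).Nonempty ∧ g ⁻¹' K ⊆ K := by
      rintro g ⟨l, -, rfl⟩
      have := foldr_pre_aux (Fin.snoc f h) K hstep l K subset_rfl hKne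
      exact ⟨this.2, this.1⟩
    exact hKproper (hBM K hKne hKcl hcond)
end

section
/- Let X be a Hausdorff topological space, f₁,…,f_k : X → X continuous maps, and A a pointwise attractor for the IFS. Suppose that for every nonempty open set I ⊆ X with A ∩ I ≠ ∅ there exist an open neighborhood Z of A and a finite word i₁,…,i_s ∈ {1,…,k} such that for each z ∈ Z there is t ∈ {0,1,…,s} with f_{i_t} ∘ ⋯ ∘ f_{i_1}(z) ∈ I (where the composition for t = 0 is the identity). Then A ⊆ closure(O⁺_ω(x)) for every disjunctive sequence ω ∈ Ω and every x ∈ B_p(A). -/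
open Set Filter Topology

lemma shift_iter {k : ℕ} : ∀ (ω : ℕ → Fin k) (m j : ℕ), shiftSeq^[m] ω j = ω (j + m)
  | _, 0, j => rfl
  | ω, m + 1, j => by
    rw [Function.iterate_succ_apply, shift_iter (shiftSeq ω) m j]
    rfl

lemma fibIter_congr {X : Type*} {k : ℕ} (f : Fin k → X → X) (σ τ : ℕ → Fin k) :
    ∀ t, (∀ j < t, σ j = τ j) → ∀ x, FibIter f σ t x = FibIter f τ t x
  | 0, _, x => rfl
  | t + 1, h, x => by
    simp only [FibIter, Function.comp_apply]
    rw [fibIter_congr f σ τ t (fun j hj => h j (by omega)) x, h t (by omega)]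

lemma fibIter_add {X : Type*} {k : ℕ} (f : Fin k → X → X) (ω : ℕ → Fin k) (n : ℕ) :
    ∀ t x, FibIter f ω (n + t) x = FibIter f (fun j => ω (n + j)) t (FibIter f ω n x)
  | 0, x => rfl
  | t + 1, x => by
    show FibIter f ω ((n + t) + 1) x = _
    simp only [FibIter, Function.comp_apply]
    rw [fibIter_add f ω n t x]

lemma fibIter_mem_hutch {X : Type*} {k : ℕ} (f : Fin k → X → X) (ω : ℕ → Fin k) (x : X) :
    ∀ n, FibIter f ω n x ∈ (Hutch f)^[n] {x}
  | 0 => rfl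
  | n + 1 => by
    rw [Function.iterate_succ_apply']
    exact Set.mem_iUnion.2 ⟨ω n, Set.mem_image_of_mem _ (fibIter_mem_hutch f ω x n)⟩

theorem chaos_game_criterion
    {X : Type*} [TopologicalSpace X] [T2Space X] {k : ℕ}
    (f : Fin k → X → X) (hf : ∀ i, Continuous (f i))
    (A : Set X) (hA : IsPointwiseAttractor f A)
    (hyp : ∀ I : Set X, IsOpen I → (A ∩ I).Nonempty →
      ∃ Z : Set X, IsOpen Z ∧ A ⊆ Z ∧ ∃ (s : ℕ) (w : ℕ → Fin k),
        ∀ z ∈ Z, ∃ t ≤ s, FibIter f w t z ∈ I) :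
    ∀ ω : ℕ → Fin k, Disjunctive ω → ∀ x ∈ BasinP f A, A ⊆ closure (Oplus f ω x) := by
  intro ω hω x hx a ha
  rw [mem_closure_iff]
  intro V hV haV
  obtain ⟨Z, hZo, hAZ, s, w, hw⟩ := hyp V hV ⟨a, ha, haV⟩
  obtain ⟨n₀, hn₀⟩ := hx Z univ hZo hAZ isOpen_univ (by simpa using hA.2.1)
  set N := max n₀ 1 with hN
  set C : Set (ℕ → Fin k) := ⋂ i : Fin s, {σ | σ (N + i) = w i} with hC
  have hCopen : IsOpen C := isOpen_iInter_of_finite fun i => by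
    show IsOpen ((fun σ : ℕ → Fin k => σ (N + (i : ℕ))) ⁻¹' {w (i : ℕ)})
    exact (continuous_apply (N + (i : ℕ))).isOpen_preimage _ (isOpen_discrete _)
  have hCne : C.Nonempty := ⟨fun m => w (m - N), by
    simp only [hC, mem_iInter, mem_setOf_eq]
    intro i; congr 1; omega⟩
  obtain ⟨σ, hσC, m, hm⟩ := hω.inter_open_nonempty C hCopen hCne
  set n := N + m with hn
  have hword : ∀ j < s, ω (n + j) = w j := by
    intro j hj
    have h1 : ω (N + j + m) = w j := by
      have h2 := mem_iInter.1 hσC ⟨j, hj⟩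
      simpa [← hm, shift_iter] using h2
    rw [← h1]
    congr 1
    omega
  set z := FibIter f ω n x with hz
  have hzZ : z ∈ Z := (hn₀ n (by omega)).1 (fibIter_mem_hutch f ω x n)
  obtain ⟨t, hts, htI⟩ := hw z hzZ
  have key : FibIter f ω (n + t) x = FibIter f w t z := by
    rw [fibIter_add f ω n t x, ← hz]
    exact fibIter_congr f _ w t (fun j hj => hword j (by omega)) z
  refine ⟨FibIter f ω (n + t) x, ?_, n + t, by omega, rfl⟩
  rw [key]; exact htI
end
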